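/- Let n ≥ 1, let x ∈ K_n, and let k ∈ {2, 3, …, n} and l ∈ {1, 2, …, n−1}. If x·a_k = f or a_l·x = f, then x = f. -/

import Mathlib

namespace Kiselman

/-- The defining relations of Kiselman's semigroup on the free monoid over `Fin n`,
where the index `i : Fin n` represents the generator `a_{i+1}` (so letters are 0-based). -/
def Rel (n : ℕ) : FreeMonoid (Fin n) → FreeMonoid (Fin n) → Prop := fun u v =>
  (∃ i : Fin n, u = .of i * .of i ∧ v = .of i) ∨
  (∃ i j : Fin n, j < i ∧
    ((u = .of i * .of j * .of i ∧ v = .of i * .of j) ∨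
     (u = .of j * .of i * .of j ∧ v = .of i * .of j)))

/-- Kiselman's semigroup (monoid) `K n`, presented by the relations `Rel n`. -/
def K (n : ℕ) : Type := (conGen (Rel n)).Quotient

instance (n : ℕ) : Monoid (K n) := inferInstanceAs (Monoid (conGen (Rel n)).Quotient)

/-- The canonical epimorphism `φ` from the free monoid onto `K n`. -/
def phi (n : ℕ) : FreeMonoid (Fin n) →* K n := Con.mk' _

/-- `φ` applied to a word given as a list of (0-based) letters. -/
def phiL (n : ℕ) (w : List (Fin n)) : K n := phi n (FreeMonoid.ofList w)

/-- The generator `a_{i+1}` of `K n` (`i` is the 0-based index). -/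
def gen {n : ℕ} (i : Fin n) : K n := phi n (FreeMonoid.of i)

/-- The word `a_hi a_{hi-1} ⋯ a_lo` (letters named 1-based), as a list of 0-based indices:
`[hi-1, hi-2, …, lo-1]` (capped at `n`). -/
def descList (n lo hi : ℕ) : List (Fin n) :=
  ((List.finRange n).filter (fun k => decide (lo ≤ k.val + 1 ∧ k.val + 1 ≤ hi))).reverse

/-- The zero element `f = a_n a_{n-1} ⋯ a_2 a_1` of `K n`. -/
def fEl (n : ℕ) : K n := phiL n (descList n 1 n)

/-- A word `w` is canonical if for every factorization `w = p ++ [i] ++ u ++ [i] ++ q`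
there are letters `j > i` and `k < i` occurring in `u`. -/
def Canonical {n : ℕ} (w : List (Fin n)) : Prop :=
  ∀ (p u q : List (Fin n)) (i : Fin n),
    w = p ++ [i] ++ u ++ [i] ++ q →
    (∃ j ∈ u, i < j) ∧ (∃ k ∈ u, k < i)

/-- The submonoid of `K n` generated by `{a_2, a_3, …, a_n}`. -/
def upper (n : ℕ) : Submonoid (K n) := Submonoid.closure (gen '' {i : Fin n | i.val ≠ 0})

/-- The submonoid of `K n` generated by `{a_1, a_2, …, a_{n-1}}`. -/
def lower (n : ℕ) : Submonoid (K n) := Submonoid.closure (gen '' {i : Fin n | i.val + 1 ≠ n})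

/-- `m(x) = min { i ∈ {0,…,n} : x ⬝ (a_i a_{i-1} ⋯ a_1) = f }`. -/
noncomputable def mIdx {n : ℕ} (x : K n) : ℕ :=
  sInf {i : ℕ | x * phiL n (descList n 1 i) = fEl n}

/-! ### Auxiliary lemmas -/

section Aux

/-- basic congruence fact -/
lemma phi_eq {n : ℕ} {u v : FreeMonoid (Fin n)} (h : conGen (Rel n) u v) :
    phi n u = phi n v := (Con.eq _).mpr h

lemma gen_idem {n : ℕ} (i : Fin n) : gen i * gen i = gen i := by
  have h : phi n (.of i * .of i) = phi n (.of i) :=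
    phi_eq (ConGen.Rel.of _ _ (Or.inl ⟨i, rfl, rfl⟩))
  simpa [gen, map_mul] using h

lemma rel1 {n : ℕ} {i j : Fin n} (h : j < i) : gen i * gen j * gen i = gen i * gen j := by
  have h' : phi n (.of i * .of j * .of i) = phi n (.of i * .of j) :=
    phi_eq (ConGen.Rel.of _ _ (Or.inr ⟨i, j, h, Or.inl ⟨rfl, rfl⟩⟩))
  simpa [gen, map_mul] using h'

lemma rel2 {n : ℕ} {i j : Fin n} (h : j < i) : gen j * gen i * gen j = gen i * gen j := by
  have h' : phi n (.of j * .of i * .of j) = phi n (.of i * .of j) :=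
    phi_eq (ConGen.Rel.of _ _ (Or.inr ⟨i, j, h, Or.inr ⟨rfl, rfl⟩⟩))
  simpa [gen, map_mul] using h'

lemma phiL_nil (n : ℕ) : phiL n [] = 1 := by simp [phiL, phi]; exact map_one _

lemma phiL_append (n : ℕ) (u v : List (Fin n)) : phiL n (u ++ v) = phiL n u * phiL n v := by
  simp [phiL, FreeMonoid.ofList_append, map_mul]

lemma phiL_singleton (n : ℕ) (c : Fin n) : phiL n [c] = gen c := by
  simp [phiL, gen, FreeMonoid.ofList_singleton]

lemma phiL_cons (n : ℕ) (c : Fin n) (w : List (Fin n)) :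
    phiL n (c :: w) = gen c * phiL n w := by
  simp [phiL, gen, FreeMonoid.ofList_cons, map_mul]

/-! #### The descending pattern -/

/-- `[b-1, b-2, …, a]` -/
def natDesc (a b : ℕ) : List ℕ := (List.range' a (b - a)).reverse

lemma natDesc_self (a : ℕ) : natDesc a a = [] := by simp [natDesc]

lemma natDesc_split {a m b : ℕ} (h1 : a ≤ m) (h2 : m ≤ b) :
    natDesc a b = natDesc m b ++ natDesc a m := by
  unfold natDesc
  rw [← List.reverse_append]
  congr 1
  have h := List.range'_append (s := a) (m := m - a) (n := b - m) (step := 1)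
  have e1 : a + 1 * (m - a) = m := by omega
  have e2 : m - a + (b - m) = b - a := by omega
  rw [e1, e2] at h
  exact h.symm

lemma natDesc_singleton (a : ℕ) : natDesc a (a + 1) = [a] := by simp [natDesc]

lemma natDesc_concat {a b : ℕ} (h : a < b) : natDesc a b = natDesc (a + 1) b ++ [a] := by
  rw [natDesc_split (Nat.le_succ a) h, natDesc_singleton]

lemma natDesc_cons {a b : ℕ} (h : a < b) : natDesc a b = (b - 1) :: natDesc a (b - 1) := by
  rw [natDesc_split (show a ≤ b - 1 by omega) (show b - 1 ≤ b by omega)]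
  have e : b - 1 + 1 = b := by omega
  have h2 : natDesc (b - 1) b = [b - 1] := by
    conv_lhs => rw [← e]
    exact natDesc_singleton (b - 1)
  rw [h2]
  rfl

lemma natDesc_eq_nil {a b : ℕ} (h : natDesc a b = []) (hab : a ≤ b) : b = a := by
  unfold natDesc at h
  rw [List.reverse_eq_nil_iff, List.range'_eq_nil_iff] at h
  omega

/-! #### Algebraic helpers -/

lemma helperA {n : ℕ} {c m : Fin n} (hmc : m < c) (Z : K n) (hZ : Z * gen c = Z) :
    Z * gen m * gen c = Z * gen m := by
  calc Z * gen m * gen c = Z * gen c * gen m * gen c := by rw [hZ]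
    _ = Z * (gen c * gen m) * gen c := by rw [mul_assoc Z (gen c) (gen m)]
    _ = Z * (gen c * gen m * gen c) := by rw [mul_assoc Z (gen c * gen m) (gen c)]
    _ = Z * (gen c * gen m) := by rw [rel1 hmc]
    _ = Z * gen c * gen m := by rw [mul_assoc]
    _ = Z * gen m := by rw [hZ]

lemma helperB {n : ℕ} {c m : Fin n} (hcm : c < m) (Z : K n) (hZ : gen c * Z = Z) :
    gen c * (gen m * Z) = gen m * Z := by
  calc gen c * (gen m * Z) = gen c * (gen m * (gen c * Z)) := by rw [hZ]
    _ = gen c * (gen m * gen c * Z) := by rw [mul_assoc (gen m) (gen c) Z]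
    _ = gen c * (gen m * gen c) * Z := by rw [mul_assoc (gen c) (gen m * gen c) Z]
    _ = gen c * gen m * gen c * Z := by rw [mul_assoc (gen c) (gen m) (gen c)]
    _ = gen m * gen c * Z := by rw [rel2 hcm]
    _ = gen m * (gen c * Z) := by rw [mul_assoc]
    _ = gen m * Z := by rw [hZ]

/-! #### Right absorption -/

lemma E2 (n : ℕ) (c : Fin n) :
    ∀ v : List (Fin n), (∀ x ∈ v, x.val ≤ c.val) → ∀ X : K n, X * gen c = X →
      X * phiL n v * gen c = X * phiL n v := by
  intro v
  induction v using List.reverseRecOn with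
  | nil =>
    intro _ X hX
    simpa [phiL_nil] using hX
  | append_singleton v' m ih =>
    intro hv X hX
    have ihv : X * phiL n v' * gen c = X * phiL n v' :=
      ih (fun x hx => hv x (by simp [hx])) X hX
    rw [phiL_append, phiL_singleton, ← mul_assoc]
    rcases lt_or_eq_of_le (hv m (by simp)) with hlt | heq
    · exact helperA (by rwa [Fin.lt_def]) _ ihv
    · have hmc : m = c := Fin.val_injective heq
      subst hmc
      rw [mul_assoc (X * phiL n v') (gen m) (gen m), gen_idem]

lemma P1 (n : ℕ) (c : Fin n)
    (hAR : ∀ m : Fin n, c.val < m.val → ∀ w' : List (Fin n),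
      (natDesc m.val n).Sublist (w'.map Fin.val) → phiL n w' * gen m = phiL n w') :
    ∀ (v Y : List (Fin n)), (natDesc c.val n).Sublist (Y.map Fin.val) →
      phiL n (Y ++ v) = phiL n (Y ++ v.filter (fun x => decide (x.val ≤ c.val))) := by
  intro v
  induction v with
  | nil => intro Y _; simp
  | cons m v' ih =>
    intro Y hY
    by_cases hm : m.val ≤ c.val
    · have hfil : (m :: v').filter (fun x => decide (x.val ≤ c.val))
          = m :: v'.filter (fun x => decide (x.val ≤ c.val)) := by
        have hmc : m ≤ c := Fin.le_def.mpr hm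
        simp [List.filter_cons, hmc]
      rw [hfil, List.append_cons Y m v',
        List.append_cons Y m (v'.filter (fun x => decide (x.val ≤ c.val)))]
      apply ih
      rw [List.map_append]
      exact hY.trans (List.sublist_append_left _ _)
    · push_neg at hm
      have hcm : c < m := Fin.lt_def.mpr hm
      have hdrop : (m :: v').filter (fun x => decide (x.val ≤ c.val))
          = v'.filter (fun x => decide (x.val ≤ c.val)) := by
        simp [List.filter_cons, hcm.not_ge]
      have hYm : (natDesc m.val n).Sublist (Y.map Fin.val) := by
        refine List.Sublist.trans ?_ hY
        rw [natDesc_split (le_of_lt hm) (le_of_lt m.isLt)]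
        exact List.sublist_append_left _ _
      calc phiL n (Y ++ m :: v') = phiL n Y * gen m * phiL n v' := by
            rw [phiL_append, phiL_cons, ← mul_assoc]
        _ = phiL n Y * phiL n v' := by rw [hAR m hm Y hYm]
        _ = phiL n (Y ++ v') := (phiL_append n Y v').symm
        _ = phiL n (Y ++ v'.filter (fun x => decide (x.val ≤ c.val))) := ih Y hY
        _ = phiL n (Y ++ (m :: v').filter (fun x => decide (x.val ≤ c.val))) := by rw [hdrop]

lemma absorb_right (n : ℕ) : ∀ (N : ℕ) (c : Fin n) (w : List (Fin n)),
    n - c.val ≤ N → (natDesc c.val n).Sublist (w.map Fin.val) →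
    phiL n w * gen c = phiL n w := by
  intro N
  induction N with
  | zero =>
    intro c w hN _
    exact absurd hN (by have := c.isLt; omega)
  | succ N ih =>
    intro c w hN hsub
    have hAR : ∀ m : Fin n, c.val < m.val → ∀ w' : List (Fin n),
        (natDesc m.val n).Sublist (w'.map Fin.val) → phiL n w' * gen m = phiL n w' := by
      intro m hm w' h'
      exact ih m w' (by omega) h'
    rw [natDesc_concat c.isLt] at hsub
    obtain ⟨r₁, r₂, hr, h₁, h₂⟩ := List.append_sublist_iff.mp hsub
    obtain ⟨u, v₀, rfl, hu, hv₀⟩ := List.map_eq_append_iff.mp hr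
    rw [← hu] at h₁
    have hcmem : c.val ∈ v₀.map Fin.val := List.singleton_sublist.mp (hv₀ ▸ h₂)
    obtain ⟨e, hev₀, he⟩ := List.mem_map.mp hcmem
    have hec : e = c := Fin.val_injective he
    have hcv₀ : c ∈ v₀ := hec ▸ hev₀
    obtain ⟨v₁, v, rfl⟩ := List.append_of_mem hcv₀
    have hUsub : (natDesc (c.val + 1) n).Sublist ((u ++ v₁).map Fin.val) := by
      refine h₁.trans ?_
      rw [List.map_append]
      exact List.sublist_append_left _ _
    have hYsub : (natDesc c.val n).Sublist (((u ++ v₁) ++ [c]).map Fin.val) := by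
      rw [natDesc_concat c.isLt, List.map_append]
      refine List.Sublist.append hUsub ?_
      simp
    have hwYv : u ++ (v₁ ++ c :: v) = ((u ++ v₁) ++ [c]) ++ v := by simp
    have hfil : ∀ x ∈ v.filter (fun x => decide (x.val ≤ c.val)), x.val ≤ c.val := by
      intro x hx
      simpa using List.of_mem_filter hx
    have hX : phiL n ((u ++ v₁) ++ [c]) * gen c = phiL n ((u ++ v₁) ++ [c]) := by
      rw [phiL_append, phiL_singleton, mul_assoc, gen_idem]
    have hP := P1 n c hAR v ((u ++ v₁) ++ [c]) hYsub
    rw [hwYv, hP, phiL_append]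
    exact E2 n c _ hfil _ hX

/-! #### Left absorption -/

lemma E2' (n : ℕ) (c : Fin n) :
    ∀ u : List (Fin n), (∀ x ∈ u, c.val ≤ x.val) → ∀ X : K n, gen c * X = X →
      gen c * (phiL n u * X) = phiL n u * X := by
  intro u
  induction u with
  | nil =>
    intro _ X hX
    simpa [phiL_nil] using hX
  | cons m u' ih =>
    intro hu X hX
    have ihu : gen c * (phiL n u' * X) = phiL n u' * X :=
      ih (fun x hx => hu x (by simp [hx])) X hX
    rw [phiL_cons, mul_assoc (gen m) (phiL n u') X]
    rcases lt_or_eq_of_le (hu m (by simp)) with hlt | heq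
    · exact helperB (by rwa [Fin.lt_def]) _ ihu
    · have hmc : c = m := Fin.val_injective heq
      subst hmc
      rw [← mul_assoc (gen c) (gen c) _, gen_idem]

lemma P1' (n : ℕ) (c : Fin n)
    (hAL : ∀ m : Fin n, m.val < c.val → ∀ w' : List (Fin n),
      (natDesc 0 (m.val + 1)).Sublist (w'.map Fin.val) → gen m * phiL n w' = phiL n w') :
    ∀ (u Y : List (Fin n)), (natDesc 0 (c.val + 1)).Sublist (Y.map Fin.val) →
      phiL n (u ++ Y) = phiL n (u.filter (fun x => decide (c.val ≤ x.val)) ++ Y) := by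
  intro u
  induction u using List.reverseRecOn with
  | nil => intro Y _; simp
  | append_singleton u' m ih =>
    intro Y hY
    by_cases hm : c.val ≤ m.val
    · have hfil : (u' ++ [m]).filter (fun x => decide (c.val ≤ x.val))
          = u'.filter (fun x => decide (c.val ≤ x.val)) ++ [m] := by
        have hcm : c ≤ m := Fin.le_def.mpr hm
        simp [List.filter_append, List.filter_cons, hcm]
      rw [hfil, List.append_assoc u' [m] Y,
        List.append_assoc (u'.filter (fun x => decide (c.val ≤ x.val))) [m] Y]
      apply ih
      rw [List.singleton_append, List.map_cons]
      exact hY.trans (List.sublist_cons_self _ _)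
    · push_neg at hm
      have hmc : m < c := Fin.lt_def.mpr hm
      have hdrop : (u' ++ [m]).filter (fun x => decide (c.val ≤ x.val))
          = u'.filter (fun x => decide (c.val ≤ x.val)) := by
        simp [List.filter_append, List.filter_cons, hmc.not_ge]
      have hYm : (natDesc 0 (m.val + 1)).Sublist (Y.map Fin.val) := by
        refine List.Sublist.trans ?_ hY
        rw [natDesc_split (Nat.zero_le (m.val + 1)) (show m.val + 1 ≤ c.val + 1 by omega)]
        exact List.sublist_append_right _ _
      calc phiL n ((u' ++ [m]) ++ Y) = phiL n u' * (gen m * phiL n Y) := by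
            rw [List.append_assoc, phiL_append, List.singleton_append, phiL_cons]
        _ = phiL n u' * phiL n Y := by rw [hAL m hm Y hYm]
        _ = phiL n (u' ++ Y) := (phiL_append n u' Y).symm
        _ = phiL n (u'.filter (fun x => decide (c.val ≤ x.val)) ++ Y) := ih Y hY
        _ = phiL n ((u' ++ [m]).filter (fun x => decide (c.val ≤ x.val)) ++ Y) := by rw [hdrop]


lemma absorb_left_body (n : ℕ) (c : Fin n)
    (hAL : ∀ m : Fin n, m.val < c.val → ∀ w' : List (Fin n),
      (natDesc 0 (m.val + 1)).Sublist (w'.map Fin.val) → gen m * phiL n w' = phiL n w')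
    (w : List (Fin n)) (hsub : (natDesc 0 (c.val + 1)).Sublist (w.map Fin.val)) :
    gen c * phiL n w = phiL n w := by
  rw [natDesc_cons (Nat.succ_pos c.val)] at hsub
  rw [← List.singleton_append] at hsub
  obtain ⟨r₁, r₂, hr, h₁, h₂⟩ := List.append_sublist_iff.mp hsub
  obtain ⟨u₀, v, rfl, hu₀, hv⟩ := List.map_eq_append_iff.mp hr
  have hcmem : c.val ∈ u₀.map Fin.val := List.singleton_sublist.mp (hu₀ ▸ h₁)
  obtain ⟨e, heu₀, he⟩ := List.mem_map.mp hcmem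
  have hec : e = c := Fin.val_injective he
  have hcu₀ : c ∈ u₀ := hec ▸ heu₀
  obtain ⟨u, t, rfl⟩ := List.append_of_mem hcu₀
  rw [← hv] at h₂
  have hVsub : (natDesc 0 c.val).Sublist ((t ++ v).map Fin.val) := by
    refine h₂.trans ?_
    rw [List.map_append]
    exact List.sublist_append_right _ _
  have hYsub : (natDesc 0 (c.val + 1)).Sublist ((c :: (t ++ v)).map Fin.val) := by
    rw [natDesc_cons (Nat.succ_pos c.val), List.map_cons]
    exact List.cons_sublist_cons.mpr hVsub
  have hwYv : (u ++ c :: t) ++ v = u ++ (c :: (t ++ v)) := by simp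
  have hfil : ∀ x ∈ u.filter (fun x => decide (c.val ≤ x.val)), c.val ≤ x.val := by
    intro x hx
    simpa using List.of_mem_filter hx
  have hX : gen c * phiL n (c :: (t ++ v)) = phiL n (c :: (t ++ v)) := by
    rw [phiL_cons, ← mul_assoc, gen_idem]
  have hP := P1' n c hAL u (c :: (t ++ v)) hYsub
  rw [hwYv, hP, phiL_append]
  exact E2' n c _ hfil _ hX

lemma absorb_left (n : ℕ) : ∀ (N : ℕ) (c : Fin n) (w : List (Fin n)),
    c.val ≤ N → (natDesc 0 (c.val + 1)).Sublist (w.map Fin.val) →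
    gen c * phiL n w = phiL n w := by
  intro N
  induction N with
  | zero =>
    intro c w hN hsub
    exact absorb_left_body n c (fun m hm => absurd hm (by omega)) w hsub
  | succ N ih =>
    intro c w hN hsub
    exact absorb_left_body n c (fun m hm w' h' => ih m w' (by omega) h') w hsub

/-! #### Full absorption and the class of `f` -/

lemma absorb_word_right (n : ℕ) (w : List (Fin n))
    (h : (natDesc 0 n).Sublist (w.map Fin.val)) (v : List (Fin n)) :
    phiL n (w ++ v) = phiL n w := by
  induction v using List.reverseRecOn with
  | nil => simp
  | append_singleton v' c ih =>
    rw [← List.append_assoc, phiL_append, phiL_singleton]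
    have hsub : (natDesc c.val n).Sublist ((w ++ v').map Fin.val) := by
      refine List.Sublist.trans ?_ (h.trans ?_)
      · rw [natDesc_split (Nat.zero_le c.val) (le_of_lt c.isLt)]
        exact List.sublist_append_left _ _
      · rw [List.map_append]
        exact List.sublist_append_left _ _
    rw [absorb_right n n c (w ++ v') (by omega) hsub, ih]

lemma absorb_word_left (n : ℕ) (w : List (Fin n))
    (h : (natDesc 0 n).Sublist (w.map Fin.val)) (u : List (Fin n)) :
    phiL n (u ++ w) = phiL n w := by
  induction u with
  | nil => simp
  | cons c u' ih =>
    rw [List.cons_append, phiL_cons, ih]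
    have hsub : (natDesc 0 (c.val + 1)).Sublist (w.map Fin.val) := by
      refine List.Sublist.trans ?_ h
      rw [natDesc_split (Nat.zero_le (c.val + 1)) (show c.val + 1 ≤ n from c.isLt)]
      exact List.sublist_append_right _ _
    exact absorb_left n n c w (le_of_lt c.isLt) hsub

lemma descList_full_eq (n : ℕ) : descList n 1 n = (List.finRange n).reverse := by
  unfold descList
  congr 1
  apply List.filter_eq_self.mpr
  intro k _
  simp only [decide_eq_true_eq]
  exact ⟨by omega, k.isLt⟩

lemma finRange_map_val (n : ℕ) : (List.finRange n).map Fin.val = List.range n := by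
  apply List.ext_getElem <;> simp

lemma fword_map (n : ℕ) : (descList n 1 n).map Fin.val = natDesc 0 n := by
  rw [descList_full_eq, List.map_reverse, finRange_map_val]
  unfold natDesc
  rw [List.range_eq_range']
  norm_num

lemma eq_f_of_desc {n : ℕ} (w : List (Fin n))
    (hsub : (natDesc 0 n).Sublist (w.map Fin.val)) : phiL n w = fEl n := by
  have h1 : phiL n (w ++ descList n 1 n) = phiL n w := absorb_word_right n w hsub _
  have h2 : phiL n (w ++ descList n 1 n) = phiL n (descList n 1 n) :=
    absorb_word_left n (descList n 1 n) (by rw [fword_map]) w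
  rw [← h1, h2]
  rfl

/-! #### The subsequence automaton -/

/-- transition map of the subsequence automaton -/
def T {n : ℕ} (c : Fin n) : Function.End ℕ := fun s => if s = c.val then s + 1 else s

def toEnd (n : ℕ) : FreeMonoid (Fin n) →* Function.End ℕ := FreeMonoid.lift T

lemma toEnd_of {n : ℕ} (c : Fin n) : toEnd n (.of c) = T c := FreeMonoid.lift_eval_of _ _

lemma toEnd_rel {n : ℕ} {u v : FreeMonoid (Fin n)} (h : Rel n u v) : toEnd n u = toEnd n v := by
  rcases h with ⟨i, rfl, rfl⟩ | ⟨i, j, hji, ⟨rfl, rfl⟩ | ⟨rfl, rfl⟩⟩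
  · funext s
    show T i (T i s) = T i s
    simp only [T]
    split_ifs <;> omega
  · funext s
    rw [Fin.lt_def] at hji
    show T i (T j (T i s)) = T i (T j s)
    simp only [T]
    split_ifs <;> omega
  · funext s
    rw [Fin.lt_def] at hji
    show T j (T i (T j s)) = T i (T j s)
    simp only [T]
    split_ifs <;> omega

lemma toEnd_eq_of_phi_eq {n : ℕ} {u v : FreeMonoid (Fin n)} (h : phi n u = phi n v) :
    toEnd n u = toEnd n v := by
  have hle : conGen (Rel n) ≤ Con.ker (toEnd n) :=
    Con.conGen_le.mpr fun a b hab => (Con.ker_rel _).mpr (toEnd_rel hab)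
  exact (Con.ker_rel _).mp (hle ((Con.eq _).mp h))

lemma le_toEnd {n : ℕ} (w : List (Fin n)) (s : ℕ) : s ≤ toEnd n (.ofList w) s := by
  induction w generalizing s with
  | nil => simp [FreeMonoid.ofList]; rfl
  | cons c w ih =>
    rw [FreeMonoid.ofList_cons, map_mul]
    show s ≤ T c (toEnd n (.ofList w) s)
    have h1 := ih s
    have h2 : ∀ t : ℕ, t ≤ T c t := by intro t; simp only [T]; split_ifs <;> omega
    exact le_trans h1 (h2 _)

lemma desc_sublist_of_toEnd {n : ℕ} (w : List (Fin n)) (s : ℕ) :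
    (natDesc s (toEnd n (.ofList w) s)).Sublist (w.map Fin.val) := by
  induction w using List.reverseRecOn generalizing s with
  | nil =>
    have h : toEnd n (.ofList ([] : List (Fin n))) s = s := by simp [FreeMonoid.ofList]; rfl
    rw [h]
    simp [natDesc]
  | append_singleton v m ih =>
    rw [FreeMonoid.ofList_append, map_mul, FreeMonoid.ofList_singleton]
    show (natDesc s ((toEnd n (.ofList v) * toEnd n (.of m)) s)).Sublist _
    have happ : (toEnd n (.ofList v) * toEnd n (.of m)) s = toEnd n (.ofList v) (T m s) := by
      rw [toEnd_of]; rfl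
    rw [happ]
    by_cases hm : s = m.val
    · have ht : T m s = s + 1 := by simp [T, hm]
      rw [ht]
      have hlt : s + 1 ≤ toEnd n (.ofList v) (s + 1) := le_toEnd v (s + 1)
      have hd : natDesc s (toEnd n (.ofList v) (s + 1)) =
          natDesc (s + 1) (toEnd n (.ofList v) (s + 1)) ++ [s] :=
        natDesc_concat (by omega)
      rw [hd, List.map_append]
      exact List.Sublist.append (ih (s + 1)) (by simp [hm])
    · have ht : T m s = s := by simp [T, hm]
      rw [ht, List.map_append]
      exact (ih s).trans (List.sublist_append_left _ _)

lemma toEnd_of_descWord {n : ℕ} : ∀ (w : List (Fin n)) (s t : ℕ), s ≤ t →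
    w.map Fin.val = natDesc s t → toEnd n (.ofList w) s = t := by
  intro w
  induction w with
  | nil =>
    intro s t hst hmap
    have h := natDesc_eq_nil hmap.symm hst
    subst h
    simp [FreeMonoid.ofList]
    rfl
  | cons c w' ih =>
    intro s t hst hmap
    rcases eq_or_lt_of_le hst with rfl | hlt
    · rw [natDesc_self] at hmap
      exact absurd hmap (by simp)
    · rw [natDesc_cons hlt] at hmap
      rw [List.map_cons, List.cons.injEq] at hmap
      obtain ⟨hc, hw'⟩ := hmap
      have ihw : toEnd n (.ofList w') s = t - 1 := ih s (t - 1) (by omega) hw'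
      rw [FreeMonoid.ofList_cons, map_mul]
      show T c (toEnd n (.ofList w') s) = t
      rw [ihw]
      simp only [T]
      rw [if_pos hc.symm]
      omega

end Aux

/-- If `x * a_k = f` for some `k ∈ {2,…,n}` or `a_l * x = f` for some `l ∈ {1,…,n-1}`,
then `x = f`. (Indices `k, l : Fin n` are 0-based: `k` represents `a_{k+1}`.) -/
theorem cancel_generator (n : ℕ) (hn : 1 ≤ n) (x : K n) (k l : Fin n)
    (hk : 0 < k.val) (hl : l.val + 1 < n)
    (h : x * gen k = fEl n ∨ gen l * x = fEl n) : x = fEl n := by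
  obtain ⟨u, hu⟩ := Con.mk'_surjective (c := conGen (Rel n)) x
  have hu' : phi n u = x := hu
  have hwu : FreeMonoid.ofList (FreeMonoid.toList u) = u := FreeMonoid.ofList_toList u
  set w : List (Fin n) := FreeMonoid.toList u with hwdef
  have hxw : x = phiL n w := by rw [← hu', phiL, hwu]
  have hfR : toEnd n (.ofList (descList n 1 n)) 0 = n :=
    toEnd_of_descWord (descList n 1 n) 0 n (Nat.zero_le n) (fword_map n)
  rcases h with h1 | h1
  · have heq : phi n (.ofList (w ++ [k])) = phi n (.ofList (descList n 1 n)) := by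
      rw [FreeMonoid.ofList_append, map_mul, FreeMonoid.ofList_singleton]
      show phiL n w * gen k = fEl n
      rw [← hxw]
      exact h1
    have hEnd := toEnd_eq_of_phi_eq heq
    have h0 : toEnd n (.ofList w) 0 = n := by
      have happ : toEnd n (.ofList (w ++ [k])) 0 = toEnd n (.ofList w) (T k 0) := by
        rw [FreeMonoid.ofList_append, map_mul, FreeMonoid.ofList_singleton, toEnd_of]
        rfl
      have hT0 : T k 0 = 0 := by
        simp only [T]
        rw [if_neg (by omega)]
      rw [← hT0]
      rw [← happ, hEnd, hfR]
    have hsub : (natDesc 0 n).Sublist (w.map Fin.val) := by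
      have hd := desc_sublist_of_toEnd w 0
      rwa [h0] at hd
    rw [hxw]
    exact eq_f_of_desc w hsub
  · have heq : phi n (.ofList (l :: w)) = phi n (.ofList (descList n 1 n)) := by
      rw [FreeMonoid.ofList_cons, map_mul]
      show gen l * phiL n w = fEl n
      rw [← hxw]
      exact h1
    have hEnd := toEnd_eq_of_phi_eq heq
    have happ : toEnd n (.ofList (l :: w)) 0 = T l (toEnd n (.ofList w) 0) := by
      rw [FreeMonoid.ofList_cons, map_mul, toEnd_of]
      rfl
    have hTl : T l (toEnd n (.ofList w) 0) = n := by
      rw [← happ, hEnd, hfR]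
    have h0 : toEnd n (.ofList w) 0 = n := by
      by_cases hs : toEnd n (.ofList w) 0 = l.val
      · exfalso
        rw [hs] at hTl
        simp only [T, if_true] at hTl
        omega
      · simp only [T] at hTl
        rwa [if_neg hs] at hTl
    have hsub : (natDesc 0 n).Sublist (w.map Fin.val) := by
      have hd := desc_sublist_of_toEnd w 0
      rwa [h0] at hd
    rw [hxw]
    exact eq_f_of_desc w hsub

end Kiselman
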